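/- arXiv:1110.6289 — 8 statements merged into one kernel-verified Lean document; each statement's English description precedes it below -/
import Mathlib

section
/- Let U : (0,∞) → ℝ be a continuous nondecreasing function, either strictly positive everywhere or strictly negative everywhere, whose right derivative U'₊ is well defined and locally bounded, and suppose limsup_{x→∞} x·U'₊(x)/|U(x)| < ∞. Then for every x₀ > 0 there exists γ ∈ ℝ, γ ≠ 0, such that U(x) ≤ U(λx) ≤ λ^γ · U(x) for all λ > 1 and all x ≥ x₀. -/
/-!
Past the threshold beyond which the elasticity `x U'₊(x) / |U(x)|` is at most `C`, and on the
compact stretch `[x₀, x₁]` before it (where `U'₊` is bounded and `|U|` is bounded below), one gets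
`y U'₊(y) ≤ γ₀ |U(y)|` for all `y ≥ x₀`. With `γ = ±γ₀` according to the sign of `U` this reads
`y U'₊(y) ≤ γ U(y)`, so `y ↦ U(y) y^(-γ)` has nonpositive right derivative and is therefore
nonincreasing on `[x₀, ∞)`; comparing it at `x` and `λx` gives `U(λx) ≤ λ^γ U(x)`.
-/

open Filter Set

theorem IsCompact.exists_pos_forall_le_abs {α : Type*} [TopologicalSpace α] {K : Set α}
    {f : α → ℝ} (hK : IsCompact K) (hf : ContinuousOn f K) (hf0 : ∀ x ∈ K, f x ≠ 0) :
    ∃ m > 0, ∀ x ∈ K, m ≤ |f x| := by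
  rcases K.eq_empty_or_nonempty with rfl | hne
  · exact ⟨1, one_pos, fun _ h => h.elim⟩
  · obtain ⟨y, hy, hmin⟩ := hK.exists_isMinOn hne hf.abs
    exact ⟨|f y|, abs_pos.2 (hf0 y hy), hmin⟩

theorem exists_pos_mul_deriv_le_mul_abs {U U' : ℝ → ℝ} (hUcont : ContinuousOn U (Ioi 0))
    (hU0 : ∀ x, 0 < x → U x ≠ 0)
    (hUlocbdd : ∀ a b : ℝ, 0 < a → ∃ M : ℝ, ∀ x ∈ Icc a b, |U' x| ≤ M)
    (hAE : ∃ C : ℝ, ∀ᶠ x in atTop, x * U' x / |U x| ≤ C) {x₀ : ℝ} (hx₀ : 0 < x₀) :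
    ∃ γ > 0, ∀ y, x₀ ≤ y → y * U' y ≤ γ * |U y| := by
  obtain ⟨C, hC⟩ := hAE
  obtain ⟨N, hN⟩ := eventually_atTop.1 hC
  set x₁ := max N x₀
  have hpos : ∀ y, x₀ ≤ y → 0 < y := fun y hy => hx₀.trans_le hy
  obtain ⟨K, hK⟩ := hUlocbdd x₀ x₁ hx₀
  obtain ⟨m, hm, hmle⟩ := isCompact_Icc.exists_pos_forall_le_abs
    (hUcont.mono fun y hy => hpos y hy.1) fun y hy => hU0 y (hpos y hy.1)
  refine ⟨max (max C 1) (x₁ * K / m), by positivity, fun y hy => ?_⟩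
  rcases le_or_gt x₁ y with hxy | hxy
  · calc y * U' y ≤ C * |U y| :=
          (div_le_iff₀ (abs_pos.2 (hU0 y (hpos y hy)))).1 (hN y (le_of_max_le_left hxy))
      _ ≤ _ := by gcongr; exact (le_max_left _ _).trans (le_max_left _ _)
  · have hy' : y ∈ Icc x₀ x₁ := ⟨hy, hxy.le⟩
    calc y * U' y ≤ y * |U' y| := by gcongr; exacts [(hpos y hy).le, le_abs_self _]
      _ ≤ x₁ * K := mul_le_mul hxy.le (hK y hy') (abs_nonneg _) ((hpos y hy).le.trans hxy.le)
      _ = x₁ * K / m * m := (div_mul_cancel₀ _ hm.ne').symm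
      _ ≤ _ := by
        gcongr
        · exact le_max_right _ _
        · exact hmle y hy'

theorem image_le_left_of_deriv_right_nonpos {f f' : ℝ → ℝ} {a b : ℝ} (hab : a ≤ b)
    (hf : ContinuousOn f (Icc a b)) (hf' : ∀ y ∈ Ico a b, HasDerivWithinAt f (f' y) (Ici y) y)
    (hf'_nonpos : ∀ y ∈ Ico a b, f' y ≤ 0) : f b ≤ f a :=
  image_le_of_deriv_right_le_deriv_boundary (B := fun _ => f a) hf hf' le_rfl
    continuousOn_const (fun y _ => hasDerivWithinAt_const y _ (f a)) hf'_nonpos ⟨hab, le_rfl⟩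

theorem le_div_rpow_mul_of_mul_deriv_le {U U' : ℝ → ℝ} {γ a b : ℝ} (ha : 0 < a) (hab : a ≤ b)
    (hUcont : ContinuousOn U (Icc a b))
    (hUderiv : ∀ y ∈ Ico a b, HasDerivWithinAt U (U' y) (Ioi y) y)
    (hineq : ∀ y ∈ Ico a b, y * U' y ≤ γ * U y) :
    U b ≤ (b / a) ^ γ * U a := by
  have hpos : ∀ y ∈ Icc a b, 0 < y := fun y hy => ha.trans_le hy.1
  have hb : 0 < b := ha.trans_le hab
  have hf' : ∀ y ∈ Ico a b, HasDerivWithinAt (fun y => U y * y ^ (-γ))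
      (U' y * y ^ (-γ) + U y * (-γ * y ^ (-γ - 1))) (Ici y) y := fun y hy =>
    (hUderiv y hy).Ici_of_Ioi.mul
      (Real.hasDerivAt_rpow_const (Or.inl (hpos y (Ico_subset_Icc_self hy)).ne')).hasDerivWithinAt
  have hf'_nonpos : ∀ y ∈ Ico a b, U' y * y ^ (-γ) + U y * (-γ * y ^ (-γ - 1)) ≤ 0 := by
    intro y hy
    have hy0 := hpos y (Ico_subset_Icc_self hy)
    have hfactor : U' y * y ^ (-γ) + U y * (-γ * y ^ (-γ - 1))
        = y ^ (-γ - 1) * (y * U' y - γ * U y) := by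
      rw [Real.rpow_sub_one hy0.ne']; field_simp; ring
    rw [hfactor]
    exact mul_nonpos_of_nonneg_of_nonpos (by positivity) (sub_nonpos.2 (hineq y hy))
  have hfab : U b * b ^ (-γ) ≤ U a * a ^ (-γ) :=
    image_le_left_of_deriv_right_nonpos hab
      (hUcont.mul (continuousOn_id.rpow_const fun y hy => Or.inl (hpos y hy).ne')) hf' hf'_nonpos
  calc U b = U b * b ^ (-γ) * b ^ γ := by
        rw [mul_assoc, ← Real.rpow_add hb, neg_add_cancel, Real.rpow_zero, mul_one]
    _ ≤ U a * a ^ (-γ) * b ^ γ := by gcongr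
    _ = (b / a) ^ γ * U a := by rw [Real.div_rpow hb.le ha.le, Real.rpow_neg ha.le]; ring

/-- Lemma A.3 (Lemma `lemma:ae_u`): a continuous nondecreasing function of constant sign
with well-defined, locally bounded right derivative and finite "asymptotic elasticity"
satisfies `U x ≤ U (λ x) ≤ λ^γ * U x` for all `λ > 1`, `x ≥ x₀`. -/
theorem stmt_0 (U U' : ℝ → ℝ)
    (hUcont : ContinuousOn U (Set.Ioi 0))
    (hUmono : ∀ ⦃x y : ℝ⦄, 0 < x → x ≤ y → U x ≤ U y)
    (hUsign : (∀ x : ℝ, 0 < x → 0 < U x) ∨ (∀ x : ℝ, 0 < x → U x < 0))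
    (hUderiv : ∀ x : ℝ, 0 < x → HasDerivWithinAt U (U' x) (Set.Ioi x) x)
    (hUlocbdd : ∀ a b : ℝ, 0 < a → ∃ M : ℝ, ∀ x ∈ Set.Icc a b, |U' x| ≤ M)
    (hAE : ∃ C : ℝ, ∀ᶠ x in atTop, x * U' x / |U x| ≤ C) :
    ∀ x₀ : ℝ, 0 < x₀ → ∃ γ : ℝ, γ ≠ 0 ∧
      ∀ lam x : ℝ, 1 < lam → x₀ ≤ x →
        U x ≤ U (lam * x) ∧ U (lam * x) ≤ lam ^ γ * U x := by
  intro x₀ hx₀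
  have hU0 : ∀ x, 0 < x → U x ≠ 0 := fun x hx =>
    hUsign.elim (fun h => (h x hx).ne') fun h => (h x hx).ne
  obtain ⟨γ₀, hγ₀, hbound⟩ := exists_pos_mul_deriv_le_mul_abs hUcont hU0 hUlocbdd hAE hx₀
  obtain ⟨γ, hγ, hγU⟩ : ∃ γ : ℝ, γ ≠ 0 ∧ ∀ y, 0 < y → γ₀ * |U y| = γ * U y := by
    rcases hUsign with h | h
    · exact ⟨γ₀, hγ₀.ne', fun y hy => by rw [abs_of_pos (h y hy)]⟩
    · exact ⟨-γ₀, neg_ne_zero.2 hγ₀.ne', fun y hy => by rw [abs_of_neg (h y hy)]; ring⟩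
  refine ⟨γ, hγ, fun lam x hlam hx => ?_⟩
  have hx0 := hx₀.trans_le hx
  have hxle : x ≤ lam * x := le_mul_of_one_le_left hx0.le hlam.le
  refine ⟨hUmono hx0 hxle, ?_⟩
  have hpos : ∀ y, x ≤ y → 0 < y := fun y hy => hx0.trans_le hy
  simpa [hx0.ne'] using le_div_rpow_mul_of_mul_deriv_le hx0 hxle
    (hUcont.mono fun y hy => hpos y hy.1) (fun y hy => hUderiv y (hpos y hy.1))
    fun y hy => (hbound y (hx.trans hy.1)).trans_eq (hγU y (hpos y hy.1))
end

section
/- Let w be a continuous drawdown function and v₀ > 0. Then the inverse F_w := K_w^{−1} is differentiable on (v₀,∞) and for every x > v₀ its elasticity satisfies x·F_w'(x)/F_w(x) = (F_w(x) − w(F_w(x)))/F_w(x), and this quantity lies in (0, 1]. -/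
/-!
Since `w u < u`, the integrand `1 / (u - w u)` is positive and continuous on `(0, ∞)`, so by the
fundamental theorem of calculus `K_w` is strictly increasing there with `K_w' = K_w / (id - w)`.
The inverse `F_w` is then monotone with an open image, hence continuous, and the inverse function
rule gives `F_w'(x) = (F_w x - w (F_w x)) / K_w (F_w x) = (F_w x - w (F_w x)) / x`.
-/

open Filter Set MeasureTheory

/-- The scale function `K_w(x) = v₀ · exp(∫_{v₀}^x du/(u - w(u)))` associated with a
drawdown function `w` and initial capital `v₀`. -/
noncomputable def Kw (w : ℝ → ℝ) (v₀ x : ℝ) : ℝ :=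
  v₀ * Real.exp (∫ u in v₀..x, 1 / (u - w u))

lemma drawdown_pos_and_lt_self {w : ℝ → ℝ} {α₁ u : ℝ} (hα₁ : α₁ < 1)
    (hw : ∀ x : ℝ, 0 < x → 0 < w x / x ∧ w x / x ≤ α₁) (hu : 0 < u) : 0 < w u ∧ w u < u := by
  obtain ⟨hpos, hle⟩ := hw u hu
  rw [div_pos_iff_of_pos_right hu] at hpos
  rw [div_le_iff₀ hu] at hle
  exact ⟨hpos, by nlinarith⟩

section RightInverse

variable {K F : ℝ → ℝ} {a x : ℝ}

lemma monotoneOn_of_rightInverse_of_strictMonoOn (hK : StrictMonoOn K (Ici a))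
    (hF : ∀ x : ℝ, a ≤ x → a ≤ F x ∧ K (F x) = x) : MonotoneOn F (Ioi a) := by
  intro y hy z hz hyz
  obtain ⟨hFy, hKFy⟩ := hF y (le_of_lt hy)
  obtain ⟨hFz, hKFz⟩ := hF z (le_of_lt hz)
  refine (hK.le_iff_le hFy hFz).1 ?_
  rwa [hKFy, hKFz]

lemma lt_of_rightInverse_of_fixed (hKa : K a = a)
    (hF : ∀ x : ℝ, a ≤ x → a ≤ F x ∧ K (F x) = x) (hx : a < x) : a < F x := by
  obtain ⟨hFx, hKFx⟩ := hF x hx.le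
  refine lt_of_le_of_ne hFx fun h => hx.ne ?_
  rw [← hKFx, ← h, hKa]

variable (hK : StrictMonoOn K (Ici a)) (hKa : K a = a)
  (hF : ∀ x : ℝ, a ≤ x → a ≤ F x ∧ K (F x) = x ∧ F (K x) = x)
include hK hKa hF

lemma continuousAt_of_rightInverse_of_strictMonoOn (hx : a < x) : ContinuousAt F x := by
  have hF' : ∀ x : ℝ, a ≤ x → a ≤ F x ∧ K (F x) = x := fun x hx => ⟨(hF x hx).1, (hF x hx).2.1⟩
  refine continuousAt_of_monotoneOn_of_image_mem_nhds
    (monotoneOn_of_rightInverse_of_strictMonoOn hK hF') (Ioi_mem_nhds hx) ?_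
  refine mem_of_superset (Ioi_mem_nhds (lt_of_rightInverse_of_fixed hKa hF' hx)) fun y hy => ?_
  have hKy : a < K y := hKa ▸ hK self_mem_Ici (mem_Ici.2 (le_of_lt hy)) hy
  exact ⟨K y, hKy, (hF y (le_of_lt hy)).2.2⟩

lemma hasDerivAt_of_rightInverse_of_strictMonoOn {k : ℝ} (hx : a < x)
    (hk : HasDerivAt K k (F x)) (hk0 : k ≠ 0) : HasDerivAt F k⁻¹ x :=
  hk.of_local_left_inverse (continuousAt_of_rightInverse_of_strictMonoOn hK hKa hF hx) hk0 <|
    eventually_of_mem (Ioi_mem_nhds hx) fun y hy => (hF y (le_of_lt hy)).2.1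

end RightInverse

section ScaleFunction

variable {w : ℝ → ℝ} {v₀ y : ℝ}

@[simp]
lemma Kw_self : Kw w v₀ v₀ = v₀ := by
  simp [Kw]

lemma Kw_pos (hv₀ : 0 < v₀) : 0 < Kw w v₀ y := by
  unfold Kw
  positivity

variable (hsub : ∀ u : ℝ, 0 < u → w u < u) (hwcont : ContinuousOn w (Ioi 0))
include hsub hwcont

lemma continuousOn_inv_sub_drawdown : ContinuousOn (fun u => 1 / (u - w u)) (Ioi 0) :=
  continuousOn_const.div (continuousOn_id.sub hwcont) fun u hu => (sub_pos.2 (hsub u hu)).ne'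

lemma hasDerivAt_Kw (hv₀ : 0 < v₀) (hy : 0 < y) :
    HasDerivAt (Kw w v₀) (Kw w v₀ y / (y - w y)) y := by
  have hcont := continuousOn_inv_sub_drawdown hsub hwcont
  have hint : IntervalIntegrable (fun u => 1 / (u - w u)) volume v₀ y :=
    (hcont.mono fun u hu => lt_of_lt_of_le (lt_min hv₀ hy) hu.1).intervalIntegrable
  have hI := intervalIntegral.integral_hasDerivAt_right hint
    (hcont.stronglyMeasurableAtFilter isOpen_Ioi y hy) (hcont.continuousAt (Ioi_mem_nhds hy))
  exact (hI.exp.const_mul v₀).congr_deriv (by rw [Kw]; ring)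

lemma strictMonoOn_Kw (hv₀ : 0 < v₀) : StrictMonoOn (Kw w v₀) (Ioi 0) := by
  refine strictMonoOn_of_deriv_pos (convex_Ioi 0)
    (fun y hy => (hasDerivAt_Kw hsub hwcont hv₀ hy).continuousAt.continuousWithinAt) ?_
  intro y hy
  rw [interior_Ioi] at hy
  rw [(hasDerivAt_Kw hsub hwcont hv₀ hy).deriv]
  exact div_pos (Kw_pos hv₀) (sub_pos.2 (hsub y hy))

end ScaleFunction

theorem stmt_8_general (w : ℝ → ℝ) (α₁ : ℝ) (hα : α₁ ∈ Set.Ioo (0:ℝ) 1)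
    (hw : ∀ x : ℝ, 0 < x → 0 < w x / x ∧ w x / x ≤ α₁)
    (hwcont : ContinuousOn w (Set.Ioi 0))
    (v₀ : ℝ) (hv₀ : 0 < v₀)
    (F : ℝ → ℝ)
    (hF : ∀ x : ℝ, v₀ ≤ x → v₀ ≤ F x ∧ Kw w v₀ (F x) = x ∧ F (Kw w v₀ x) = x) :
    ∀ x : ℝ, v₀ < x → ∃ d : ℝ, HasDerivAt F d x ∧
      x * d / F x = (F x - w (F x)) / F x ∧
      0 < (F x - w (F x)) / F x ∧ (F x - w (F x)) / F x ≤ 1 := by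
  intro x hx
  have hsub : ∀ u : ℝ, 0 < u → w u < u := fun u hu => (drawdown_pos_and_lt_self hα.2 hw hu).2
  have hK : StrictMonoOn (Kw w v₀) (Ici v₀) :=
    (strictMonoOn_Kw hsub hwcont hv₀).mono fun u hu => hv₀.trans_le hu
  have hFx : 0 < F x :=
    hv₀.trans (lt_of_rightInverse_of_fixed Kw_self (fun y hy => ⟨(hF y hy).1, (hF y hy).2.1⟩) hx)
  obtain ⟨hwFx, hwFx_lt⟩ := drawdown_pos_and_lt_self hα.2 hw hFx
  have hd := hasDerivAt_of_rightInverse_of_strictMonoOn hK Kw_self hF hx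
    (hasDerivAt_Kw hsub hwcont hv₀ hFx) (div_pos (Kw_pos hv₀) (sub_pos.2 hwFx_lt)).ne'
  rw [(hF x hx.le).2.1, inv_div] at hd
  have hx0 : x ≠ 0 := (hv₀.trans hx).ne'
  refine ⟨_, hd, by field_simp, div_pos (sub_pos.2 hwFx_lt) hFx, (div_le_one hFx).2 (by linarith)⟩

/-- For continuous `w`, the inverse `F_w = K_w^{-1}` is differentiable on `(v₀,∞)` and
its elasticity satisfies `x F_w'(x)/F_w(x) = (F_w(x) - w(F_w(x)))/F_w(x) ∈ (0,1]`. -/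
theorem stmt_8 (w : ℝ → ℝ) (α₁ : ℝ) (hα : α₁ ∈ Set.Ioo (0:ℝ) 1)
    (hwmono : ∀ ⦃x y : ℝ⦄, 0 < x → x ≤ y → w x ≤ w y)
    (hw : ∀ x : ℝ, 0 < x → 0 < w x / x ∧ w x / x ≤ α₁)
    (hwcont : ContinuousOn w (Set.Ioi 0))
    (v₀ : ℝ) (hv₀ : 0 < v₀)
    (F : ℝ → ℝ)
    (hF : ∀ x : ℝ, v₀ ≤ x → v₀ ≤ F x ∧ Kw w v₀ (F x) = x ∧ F (Kw w v₀ x) = x) :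
    ∀ x : ℝ, v₀ < x → ∃ d : ℝ, HasDerivAt F d x ∧
      x * d / F x = (F x - w (F x)) / F x ∧
      0 < (F x - w (F x)) / F x ∧ (F x - w (F x)) / F x ≤ 1 :=
  stmt_8_general w α₁ hα hw hwcont v₀ hv₀ F hF
end

section
/- Let v₀ > 0, let F : [v₀,∞) → [v₀,∞) be a continuous strictly increasing bijection that is differentiable on (v₀,∞) and satisfies x·F'(x) ≤ F(x) for all x > v₀, and let U : (0,∞) → ℝ be a continuous nondecreasing function, either strictly positive everywhere or strictly negative everywhere, with well-defined right derivative U'₊. Then limsup_{x→∞} x·(U∘F)'₊(x)/|U(F(x))| ≤ limsup_{y→∞} y·U'₊(y)/|U(y)|. -/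
open Filter Set Topology

/-
Since `U` is nondecreasing, `U'₊ ≥ 0`, so the elasticity bound `x F'(x) ≤ F(x)` gives
`x U'₊(F x) F'(x) / |U(F x)| ≤ F(x) U'₊(F x) / |U(F x)|` for large `x`. The right-hand side is
`g ∘ F` with `g y = y U'₊(y) / |U(y)|`, and `F → ∞`, so its limsup is at most that of `g`.
-/

lemma tendsto_atTop_of_monotoneOn_of_surjOn {α β : Type*} [Preorder α] [LinearOrder β]
    {f : α → β} {a : α} {b : β} (hmono : MonotoneOn f (Ici a))
    (hsurj : SurjOn f (Ici a) (Ici b)) :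
    Tendsto f atTop atTop := by
  refine tendsto_atTop.2 fun c => ?_
  obtain ⟨x₀, hx₀, hfx₀⟩ := hsurj (le_max_right c b : max c b ∈ Ici b)
  filter_upwards [eventually_ge_atTop x₀] with x hx
  calc c ≤ max c b := le_max_left c b
    _ = f x₀ := hfx₀.symm
    _ ≤ f x := hmono hx₀ (le_trans hx₀ hx) hx

lemma accPt_Ioi (x : ℝ) : AccPt x (𝓟 (Ioi x)) := by
  rw [accPt_principal_iff_nhdsWithin, sdiff_singleton_eq_self self_notMem_Ioi]
  infer_instance

theorem stmt_9_general (v₀ : ℝ) (F F' : ℝ → ℝ)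
    (hFmono : StrictMonoOn F (Set.Ici v₀))
    (hFbij : Set.BijOn F (Set.Ici v₀) (Set.Ici v₀))
    (hFel : ∀ x : ℝ, v₀ < x → x * F' x ≤ F x)
    (U U' : ℝ → ℝ)
    (hUmono : ∀ ⦃x y : ℝ⦄, 0 < x → x ≤ y → U x ≤ U y)
    (hUderiv : ∀ x : ℝ, 0 < x → HasDerivWithinAt U (U' x) (Set.Ioi x) x) :
    Filter.limsup (fun x : ℝ => ((x * (U' (F x) * F' x) / |U (F x)| : ℝ) : EReal)) atTop ≤
      Filter.limsup (fun y : ℝ => ((y * U' y / |U y| : ℝ) : EReal)) atTop := by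
  have hFtend : Tendsto F atTop atTop :=
    tendsto_atTop_of_monotoneOn_of_surjOn hFmono.monotoneOn hFbij.surjOn
  have hU'nonneg : ∀ y, 0 < y → 0 ≤ U' y := fun y hy =>
    (hUderiv y hy).nonneg_of_monotoneOn (accPt_Ioi y)
      fun _ ha _ _ hab => hUmono (hy.trans ha) hab
  have hcomp : ∀ᶠ x in atTop, ((x * (U' (F x) * F' x) / |U (F x)| : ℝ) : EReal) ≤
      ((F x * U' (F x) / |U (F x)| : ℝ) : EReal) := by
    filter_upwards [eventually_gt_atTop v₀, hFtend.eventually_gt_atTop 0] with x hx hFx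
    have hnum : x * (U' (F x) * F' x) ≤ F x * U' (F x) := by
      nlinarith [hFel x hx, hU'nonneg (F x) hFx]
    exact_mod_cast div_le_div_of_nonneg_right hnum (abs_nonneg _)
  exact (limsup_le_limsup hcomp).trans
    (limsup_le_limsup_of_le (u := fun y : ℝ => ((y * U' y / |U y| : ℝ) : EReal)) hFtend)

/-- If `F : [v₀,∞) → [v₀,∞)` is a continuous strictly increasing bijection,
differentiable on `(v₀,∞)` with elasticity `x F'(x) ≤ F(x)`, and `U` is a continuous
nondecreasing function of constant sign with right derivative `U'₊`, then
`limsup_{x→∞} x (U∘F)'₊(x)/|U(F(x))| ≤ limsup_{y→∞} y U'₊(y)/|U(y)|`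
(with `(U∘F)'₊(x) = U'₊(F(x)) F'(x)`); the limsups are taken in the extended reals. -/
theorem stmt_9 (v₀ : ℝ) (hv₀ : 0 < v₀) (F F' : ℝ → ℝ)
    (hFcont : ContinuousOn F (Set.Ici v₀))
    (hFmono : StrictMonoOn F (Set.Ici v₀))
    (hFbij : Set.BijOn F (Set.Ici v₀) (Set.Ici v₀))
    (hFderiv : ∀ x : ℝ, v₀ < x → HasDerivAt F (F' x) x)
    (hFel : ∀ x : ℝ, v₀ < x → x * F' x ≤ F x)
    (U U' : ℝ → ℝ)
    (hUcont : ContinuousOn U (Set.Ioi 0))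
    (hUmono : ∀ ⦃x y : ℝ⦄, 0 < x → x ≤ y → U x ≤ U y)
    (hUsign : (∀ x : ℝ, 0 < x → 0 < U x) ∨ (∀ x : ℝ, 0 < x → U x < 0))
    (hUderiv : ∀ x : ℝ, 0 < x → HasDerivWithinAt U (U' x) (Set.Ioi x) x) :
    Filter.limsup (fun x : ℝ => ((x * (U' (F x) * F' x) / |U (F x)| : ℝ) : EReal)) atTop ≤
      Filter.limsup (fun y : ℝ => ((y * U' y / |U y| : ℝ) : EReal)) atTop :=
  stmt_9_general v₀ F F' hFmono hFbij hFel U U' hUmono hUderiv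
end

section
/- Let w be a drawdown function with constant α₁ ∈ (0,1), v₀ > 0, and F_w := K_w^{−1}. Let U : (0,∞) → (0,∞) be nondecreasing with U(x)/x^ε → ∞ as x → ∞ for some ε > 0. Then for every δ > 0 with δ/(1−α₁) < ε one has U(F_w(x))/x^δ → ∞ as x → ∞. -/
open Filter Set MeasureTheory

/-!
Since `w(u) ≤ α₁ u`, the integrand of `K_w` is at most `1/((1-α₁) u)`, so
`K_w(x) ≤ v₀ (x/v₀)^{1/(1-α₁)}` and, inverting, `F_w(x) ≥ v₀ (x/v₀)^{1-α₁}`.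
Hence `U(F_w(x)) ≥ U(v₀^{α₁} x^{1-α₁})`, which outgrows `x^{(1-α₁)ε}` and therefore `x^δ`.
-/

section ScaleFunction

variable {w : ℝ → ℝ} {α v₀ x : ℝ}

lemma integral_one_div_sub_le (hα : α < 1) (hw : ∀ u, 0 < u → w u ≤ α * u) (hv₀ : 0 < v₀)
    (hx : v₀ ≤ x) :
    ∫ u in v₀..x, 1 / (u - w u) ≤ (1 - α)⁻¹ * Real.log (x / v₀) := by
  have hc : 0 < 1 - α := sub_pos.2 hα
  have hbound : ∀ u ∈ Ioc v₀ x, 0 ≤ 1 / (u - w u) ∧ 1 / (u - w u) ≤ (1 - α)⁻¹ * u⁻¹ := by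
    intro u hu
    have hu : 0 < u := hv₀.trans hu.1
    have hsub : (1 - α) * u ≤ u - w u := by linarith [hw u hu]
    have hcu : 0 < (1 - α) * u := mul_pos hc hu
    refine ⟨(one_div_pos.2 (hcu.trans_le hsub)).le, ?_⟩
    rw [← mul_inv]
    simpa only [one_div] using one_div_le_one_div_of_le hcu hsub
  have hint : IntervalIntegrable (fun u => (1 - α)⁻¹ * u⁻¹) volume v₀ x :=
    (intervalIntegral.intervalIntegrable_inv (fun u hu => ((hv₀.trans_le
      (by rw [uIcc_of_le hx] at hu; exact hu.1))).ne') continuousOn_id).const_mul _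
  calc ∫ u in v₀..x, 1 / (u - w u) ≤ ∫ u in v₀..x, (1 - α)⁻¹ * u⁻¹ := by
        rw [intervalIntegral.integral_of_le hx, intervalIntegral.integral_of_le hx]
        exact integral_mono_of_nonneg
          (ae_restrict_of_forall_mem measurableSet_Ioc fun u hu => (hbound u hu).1) hint.1
          (ae_restrict_of_forall_mem measurableSet_Ioc fun u hu => (hbound u hu).2)
    _ = (1 - α)⁻¹ * Real.log (x / v₀) := by
        rw [intervalIntegral.integral_const_mul, integral_inv_of_pos hv₀ (hv₀.trans_le hx)]

lemma Kw_le_rpow (hα : α < 1) (hw : ∀ u, 0 < u → w u ≤ α * u) (hv₀ : 0 < v₀) (hx : v₀ ≤ x) :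
    Kw w v₀ x ≤ v₀ * (x / v₀) ^ (1 - α)⁻¹ := by
  have hxv : 0 < x / v₀ := div_pos (hv₀.trans_le hx) hv₀
  rw [Kw, Real.rpow_def_of_pos hxv, mul_comm (Real.log _)]
  gcongr
  exact integral_one_div_sub_le hα hw hv₀ hx

lemma rpow_Kw_le (hα : α < 1) (hw : ∀ u, 0 < u → w u ≤ α * u) (hv₀ : 0 < v₀) (hx : v₀ ≤ x) :
    v₀ * (Kw w v₀ x / v₀) ^ (1 - α) ≤ x := by
  have hc : 0 < 1 - α := sub_pos.2 hα
  have hK : 0 ≤ Kw w v₀ x / v₀ := div_nonneg (by unfold Kw; positivity) hv₀.le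
  have hxv : 0 ≤ x / v₀ := div_nonneg (hv₀.le.trans hx) hv₀.le
  have hle : Kw w v₀ x / v₀ ≤ (x / v₀) ^ (1 - α)⁻¹ :=
    (div_le_iff₀' hv₀).2 (Kw_le_rpow hα hw hv₀ hx)
  calc v₀ * (Kw w v₀ x / v₀) ^ (1 - α) ≤ v₀ * ((x / v₀) ^ (1 - α)⁻¹) ^ (1 - α) := by gcongr
    _ = x := by
        rw [← Real.rpow_mul hxv, inv_mul_cancel₀ hc.ne', Real.rpow_one]
        field_simp

end ScaleFunction

lemma tendsto_comp_div_rpow_atTop {U G : ℝ → ℝ} {a c ε δ : ℝ} (hUmono : MonotoneOn U (Ioi 0))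
    (hU : Tendsto (fun x => U x / x ^ ε) atTop atTop) (ha : 0 < a) (hc : 0 < c)
    (hδ : δ < c * ε) (hG : ∀ᶠ x in atTop, a * x ^ c ≤ G x) :
    Tendsto (fun x => U (G x) / x ^ δ) atTop atTop := by
  have hφ : Tendsto (fun x : ℝ => a * x ^ c) atTop atTop :=
    (tendsto_rpow_atTop hc).const_mul_atTop ha
  have hpow : Tendsto (fun x : ℝ => (a * x ^ c) ^ ε / x ^ δ) atTop atTop := by
    refine (((tendsto_rpow_atTop (sub_pos.2 hδ)).const_mul_atTop
      (Real.rpow_pos_of_pos ha ε))).congr' ?_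
    filter_upwards [eventually_gt_atTop 0] with x hx
    rw [Real.mul_rpow ha.le (by positivity), ← Real.rpow_mul hx.le, Real.rpow_sub hx]
    ring
  refine tendsto_atTop_mono' _ ?_ ((hU.comp hφ).atTop_mul_atTop₀ hpow)
  filter_upwards [eventually_gt_atTop 0, hG] with x hx hGx
  have hφx : 0 < a * x ^ c := by positivity
  calc U (a * x ^ c) / (a * x ^ c) ^ ε * ((a * x ^ c) ^ ε / x ^ δ) = U (a * x ^ c) / x ^ δ := by
        field_simp
    _ ≤ U (G x) / x ^ δ := by
        gcongr
        exact hUmono hφx (hφx.trans_le hGx) hGx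

theorem stmt_10_general (w : ℝ → ℝ) (α₁ : ℝ) (hα : α₁ ∈ Set.Ioo (0:ℝ) 1)
    (hw : ∀ x : ℝ, 0 < x → 0 < w x / x ∧ w x / x ≤ α₁)
    (v₀ : ℝ) (hv₀ : 0 < v₀)
    (F : ℝ → ℝ)
    (hF : ∀ x : ℝ, v₀ ≤ x → v₀ ≤ F x ∧ Kw w v₀ (F x) = x ∧ F (Kw w v₀ x) = x)
    (U : ℝ → ℝ)
    (hUmono : ∀ ⦃x y : ℝ⦄, 0 < x → x ≤ y → U x ≤ U y)
    (ε : ℝ)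
    (hU : Tendsto (fun x : ℝ => U x / x ^ ε) atTop atTop)
    (δ : ℝ) (hδε : δ / (1 - α₁) < ε) :
    Tendsto (fun x : ℝ => U (F x) / x ^ δ) atTop atTop := by
  have hc : 0 < 1 - α₁ := sub_pos.2 hα.2
  have hw' : ∀ u, 0 < u → w u ≤ α₁ * u := fun u hu => (div_le_iff₀ hu).1 (hw u hu).2
  have hF_lower : ∀ᶠ x in atTop, v₀ ^ α₁ * x ^ (1 - α₁) ≤ F x := by
    filter_upwards [eventually_ge_atTop v₀] with x hx
    obtain ⟨hFx, hKF, -⟩ := hF x hx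
    calc v₀ ^ α₁ * x ^ (1 - α₁) = v₀ * (x / v₀) ^ (1 - α₁) := by
          rw [Real.div_rpow (hv₀.le.trans hx) hv₀.le, Real.rpow_sub hv₀, Real.rpow_one]
          field_simp
      _ ≤ F x := by simpa only [hKF] using rpow_Kw_le hα.2 hw' hv₀ hFx
  exact tendsto_comp_div_rpow_atTop (fun x hx _ _ hxy => hUmono hx hxy) hU
    (Real.rpow_pos_of_pos hv₀ _) hc ((div_lt_iff₀ hc).1 hδε |>.trans_eq (mul_comm _ _)) hF_lower

/-- If the positive nondecreasing `U` dominates the power `x^ε` asymptotically,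
then `U ∘ F_w` dominates `x^δ` whenever `δ/(1-α₁) < ε`. -/
theorem stmt_10 (w : ℝ → ℝ) (α₁ : ℝ) (hα : α₁ ∈ Set.Ioo (0:ℝ) 1)
    (hwmono : ∀ ⦃x y : ℝ⦄, 0 < x → x ≤ y → w x ≤ w y)
    (hw : ∀ x : ℝ, 0 < x → 0 < w x / x ∧ w x / x ≤ α₁)
    (v₀ : ℝ) (hv₀ : 0 < v₀)
    (F : ℝ → ℝ)
    (hF : ∀ x : ℝ, v₀ ≤ x → v₀ ≤ F x ∧ Kw w v₀ (F x) = x ∧ F (Kw w v₀ x) = x)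
    (U : ℝ → ℝ)
    (hUpos : ∀ x : ℝ, 0 < x → 0 < U x)
    (hUmono : ∀ ⦃x y : ℝ⦄, 0 < x → x ≤ y → U x ≤ U y)
    (ε : ℝ) (hε : 0 < ε)
    (hU : Tendsto (fun x : ℝ => U x / x ^ ε) atTop atTop)
    (δ : ℝ) (hδ : 0 < δ) (hδε : δ / (1 - α₁) < ε) :
    Tendsto (fun x : ℝ => U (F x) / x ^ δ) atTop atTop :=
  stmt_10_general w α₁ hα hw v₀ hv₀ F hF U hUmono ε hU δ hδε
end

section
/- Let w be a drawdown function with constant α₁ ∈ (0,1), v₀ > 0, and F_w := K_w^{−1}. Let U : (0,∞) → (−∞,0) be nondecreasing with U(x)·x^ε → 0 as x → ∞ for some ε > 0. Then U(F_w(x))·x^{ε(1−α₁)} → 0 as x → ∞. -/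
/-! Since `w u ≤ α₁ u`, the integrand of `K_w` is at most `1 / ((1 - α₁) u)`, so
`K_w(y) ≤ v₀ (y / v₀)^{1/(1-α₁)}` and hence `F_w(x) ≥ c x^{1-α₁}` with `c = v₀^{α₁}`.
As `U` is nondecreasing and negative, `U(c x^{1-α₁}) x^{ε(1-α₁)} ≤ U(F_w(x)) x^{ε(1-α₁)} ≤ 0`,
and the left-hand side is `c^{-ε} U(y) y^ε` at `y = c x^{1-α₁} → ∞`. -/

open Filter Set MeasureTheory

open Topology

lemma integral_one_div_sub_le_s11 {w : ℝ → ℝ} {β a b : ℝ} (hβ : 0 < β) (ha : 0 < a) (hab : a ≤ b)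
    (hw : ∀ u ∈ Icc a b, β * u ≤ u - w u) :
    ∫ u in a..b, 1 / (u - w u) ≤ β⁻¹ * Real.log (b / a) := by
  have hbound : ∀ u ∈ Ioc a b, 0 < u - w u ∧ 1 / (u - w u) ≤ β⁻¹ * u⁻¹ := by
    intro u hu
    have hu0 : 0 < u := ha.trans hu.1
    have hgap := hw u (Ioc_subset_Icc_self hu)
    refine ⟨by nlinarith, ?_⟩
    rw [one_div, ← mul_inv]
    exact inv_anti₀ (by positivity) hgap
  have hinv : IntegrableOn (fun u : ℝ => β⁻¹ * u⁻¹) (Ioc a b) := by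
    refine (ContinuousOn.integrableOn_Icc ?_).mono_set Ioc_subset_Icc_self
    exact continuousOn_const.mul
      (continuousOn_inv₀.mono fun u hu => (ha.trans_le hu.1).ne')
  -- `integral_mono_of_nonneg` needs no integrability of the smaller side, hence no measurability of `w`.
  calc ∫ u in a..b, 1 / (u - w u)
      ≤ ∫ u in a..b, β⁻¹ * u⁻¹ := by
        rw [intervalIntegral.integral_of_le hab, intervalIntegral.integral_of_le hab]
        refine integral_mono_of_nonneg ?_ hinv ?_ <;>
          refine (ae_restrict_iff' measurableSet_Ioc).2 (ae_of_all _ fun u hu => ?_)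
        · exact (one_div_pos.2 (hbound u hu).1).le
        · exact (hbound u hu).2
    _ = β⁻¹ * Real.log (b / a) := by
        rw [intervalIntegral.integral_const_mul, integral_inv_of_pos ha (ha.trans_le hab)]

lemma Kw_le_rpow_s11 {w : ℝ → ℝ} {β v₀ y : ℝ} (hβ : 0 < β) (hv₀ : 0 < v₀) (hy : v₀ ≤ y)
    (hw : ∀ u ∈ Icc v₀ y, β * u ≤ u - w u) :
    Kw w v₀ y ≤ v₀ * (y / v₀) ^ β⁻¹ := by
  rw [Kw, Real.rpow_def_of_pos (div_pos (hv₀.trans_le hy) hv₀), mul_comm (Real.log _)]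
  gcongr
  exact integral_one_div_sub_le_s11 hβ hv₀ hy hw

lemma rpow_le_of_Kw_eq {w : ℝ → ℝ} {β v₀ x z : ℝ} (hβ : 0 < β) (hv₀ : 0 < v₀) (hz : v₀ ≤ z)
    (hw : ∀ u ∈ Icc v₀ z, β * u ≤ u - w u) (hK : Kw w v₀ z = x) :
    v₀ ^ (1 - β) * x ^ β ≤ z := by
  have hx : 0 ≤ x := hK ▸ mul_nonneg hv₀.le (Real.exp_pos _).le
  have hxz : x / v₀ ≤ (z / v₀) ^ β⁻¹ := by
    rw [div_le_iff₀ hv₀, mul_comm, ← hK]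
    exact Kw_le_rpow_s11 hβ hv₀ hz hw
  have hz0 : 0 < z := hv₀.trans_le hz
  rw [Real.le_rpow_inv_iff_of_pos (by positivity) (by positivity) hβ,
    Real.div_rpow hx hv₀.le, div_le_div_iff₀ (by positivity) hv₀] at hxz
  calc v₀ ^ (1 - β) * x ^ β = x ^ β * v₀ / v₀ ^ β := by
        rw [Real.rpow_sub hv₀, Real.rpow_one]; ring
    _ ≤ z := by rw [div_le_iff₀ (by positivity)]; exact hxz

lemma tendsto_comp_const_mul_rpow {U : ℝ → ℝ} {ε c β : ℝ} (hc : 0 < c) (hβ : 0 < β)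
    (hU : Tendsto (fun x => U x * x ^ ε) atTop (𝓝 0)) :
    Tendsto (fun x => U (c * x ^ β) * x ^ (ε * β)) atTop (𝓝 0) := by
  have hg : Tendsto (fun x : ℝ => c * x ^ β) atTop atTop :=
    (tendsto_rpow_atTop hβ).const_mul_atTop hc
  have h := (hU.comp hg).const_mul (c ^ (-ε))
  rw [mul_zero] at h
  refine h.congr' ?_
  filter_upwards [eventually_ge_atTop 0] with x hx
  simp only [Function.comp_apply]
  rw [Real.mul_rpow hc.le (by positivity), ← Real.rpow_mul hx, mul_comm β ε,
    Real.rpow_neg hc.le]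
  field_simp

lemma tendsto_comp_mul_of_monotone_of_nonpos {U f g h : ℝ → ℝ}
    (hUnonpos : ∀ x, 0 < x → U x ≤ 0) (hUmono : ∀ ⦃x y⦄, 0 < x → x ≤ y → U x ≤ U y)
    (hg : Tendsto (fun x => U (g x) * h x) atTop (𝓝 0))
    (hgf : ∀ᶠ x in atTop, 0 < g x ∧ g x ≤ f x) (hh : ∀ᶠ x in atTop, 0 ≤ h x) :
    Tendsto (fun x => U (f x) * h x) atTop (𝓝 0) := by
  refine tendsto_of_tendsto_of_tendsto_of_le_of_le' hg tendsto_const_nhds ?_ ?_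
  · filter_upwards [hgf, hh] with x ⟨hg0, hgf⟩ hh
    exact mul_le_mul_of_nonneg_right (hUmono hg0 hgf) hh
  · filter_upwards [hgf, hh] with x ⟨hg0, hgf⟩ hh
    exact mul_nonpos_of_nonpos_of_nonneg (hUnonpos _ (hg0.trans_le hgf)) hh

theorem stmt_11_general (w : ℝ → ℝ) (α₁ : ℝ) (hα : α₁ ∈ Set.Ioo (0:ℝ) 1)
    (hw : ∀ x : ℝ, 0 < x → 0 < w x / x ∧ w x / x ≤ α₁)
    (v₀ : ℝ) (hv₀ : 0 < v₀)
    (F : ℝ → ℝ)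
    (hF : ∀ x : ℝ, v₀ ≤ x → v₀ ≤ F x ∧ Kw w v₀ (F x) = x ∧ F (Kw w v₀ x) = x)
    (U : ℝ → ℝ)
    (hUneg : ∀ x : ℝ, 0 < x → U x < 0)
    (hUmono : ∀ ⦃x y : ℝ⦄, 0 < x → x ≤ y → U x ≤ U y)
    (ε : ℝ)
    (hU : Tendsto (fun x : ℝ => U x * x ^ ε) atTop (nhds 0)) :
    Tendsto (fun x : ℝ => U (F x) * x ^ (ε * (1 - α₁))) atTop (nhds 0) := by
  have hβ : 0 < 1 - α₁ := sub_pos.2 hα.2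
  have hgap : ∀ u ∈ Ici v₀, (1 - α₁) * u ≤ u - w u := fun u hu => by
    have hu0 : 0 < u := hv₀.trans_le hu
    have h := (div_le_iff₀ hu0).1 (hw u hu0).2
    linarith
  have hc : 0 < v₀ ^ (1 - (1 - α₁)) := Real.rpow_pos_of_pos hv₀ _
  refine tendsto_comp_mul_of_monotone_of_nonpos (fun x hx => (hUneg x hx).le) hUmono
    (tendsto_comp_const_mul_rpow hc hβ hU) ?_ ?_
  · filter_upwards [eventually_ge_atTop v₀] with x hx
    obtain ⟨hFx, hKF, -⟩ := hF x hx
    exact ⟨mul_pos hc (Real.rpow_pos_of_pos (hv₀.trans_le hx) _),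
      rpow_le_of_Kw_eq hβ hv₀ hFx (fun u hu => hgap u hu.1) hKF⟩
  · filter_upwards [eventually_ge_atTop 0] with x hx
    positivity

/-- If the negative nondecreasing `U` satisfies `U(x) x^ε → 0`, then
`U(F_w(x)) x^{ε(1-α₁)} → 0` as `x → ∞`. -/
theorem stmt_11 (w : ℝ → ℝ) (α₁ : ℝ) (hα : α₁ ∈ Set.Ioo (0:ℝ) 1)
    (hwmono : ∀ ⦃x y : ℝ⦄, 0 < x → x ≤ y → w x ≤ w y)
    (hw : ∀ x : ℝ, 0 < x → 0 < w x / x ∧ w x / x ≤ α₁)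
    (v₀ : ℝ) (hv₀ : 0 < v₀)
    (F : ℝ → ℝ)
    (hF : ∀ x : ℝ, v₀ ≤ x → v₀ ≤ F x ∧ Kw w v₀ (F x) = x ∧ F (Kw w v₀ x) = x)
    (U : ℝ → ℝ)
    (hUneg : ∀ x : ℝ, 0 < x → U x < 0)
    (hUmono : ∀ ⦃x y : ℝ⦄, 0 < x → x ≤ y → U x ≤ U y)
    (ε : ℝ) (hε : 0 < ε)
    (hU : Tendsto (fun x : ℝ => U x * x ^ ε) atTop (nhds 0)) :
    Tendsto (fun x : ℝ => U (F x) * x ^ (ε * (1 - α₁))) atTop (nhds 0) :=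
  stmt_11_general w α₁ hα hw v₀ hv₀ F hF U hUneg hUmono ε hU
end

section
/- Let U : (0,∞) → (0,∞) be a nondecreasing concave function with lim_{x↓0} U(x) ≥ 0, and suppose U(x)/x^ε → ∞ as x → ∞ for some ε > 0. Then ε ≤ limsup_{x→∞} x·U'₊(x)/U(x) ≤ 1. -/
/-!
Concavity puts the graph of `U` below its right tangent line at `x`; letting the abscissa tend
to `0⁺` gives `x U'₊(x) ≤ U(x) - L ≤ U(x)`, and monotonicity gives `U'₊ ≥ 0`, so the elasticity
`x U'₊(x) / U(x)` lies in `[0, 1]`. If its limsup were below `ε`, then `x U'₊ ≤ c U` for large `x`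
and some `c < ε`, which makes `U(x) x^(-c)` nonincreasing; hence `U(x) / x^ε = O(x^(c - ε)) → 0`,
contradicting the growth hypothesis.
-/

open Filter Set Topology

lemma accPt_principal_Ioi {α : Type*} [TopologicalSpace α] [LinearOrder α] [OrderTopology α]
    [DenselyOrdered α] [NoMaxOrder α] (x : α) : AccPt x (𝓟 (Ioi x)) := by
  rw [accPt_principal_iff_nhdsWithin, sdiff_singleton_eq_self self_notMem_Ioi]
  infer_instance

namespace ConcaveOn

variable {S : Set ℝ} {f : ℝ → ℝ} {x y f' : ℝ}

lemma le_slope_of_hasDerivWithinAt_Ioi_right (hfc : ConcaveOn ℝ S f) (hx : x ∈ S)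
    (hxy : x < y) (hS : S ∈ 𝓝[>] y) (hf' : HasDerivWithinAt f f' (Ioi y) y) :
    f' ≤ slope f x y := by
  apply le_of_tendsto <| (hasDerivWithinAt_iff_tendsto_slope' self_notMem_Ioi).mp hf'
  filter_upwards [hS, self_mem_nhdsWithin] with z hz (hyz : y < z)
  rw [slope_def_field, slope_def_field]
  exact hfc.slope_anti_adjacent hx hz hxy hyz

lemma sub_mul_le_sub_of_tendsto_nhdsGT {a L : ℝ} (hfc : ConcaveOn ℝ (Ioi a) f)
    (hL : Tendsto f (𝓝[>] a) (𝓝 L)) (hax : a < x) (hf' : HasDerivWithinAt f f' (Ioi x) x) :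
    (x - a) * f' ≤ f x - L := by
  have htangent : ∀ y ∈ Ioo a x, f y ≤ f x - (x - y) * f' := by
    rintro y ⟨hay, hyx⟩
    have := hfc.le_slope_of_hasDerivWithinAt_Ioi_right hay hyx
      (mem_nhdsWithin_of_mem_nhds (Ioi_mem_nhds hax)) hf'
    rw [slope_def_field, le_div_iff₀ (sub_pos.2 hyx)] at this
    linarith
  have hline : Tendsto (fun y => f x - (x - y) * f') (𝓝[>] a) (𝓝 (f x - (x - a) * f')) :=
    ((continuous_const.sub ((continuous_const.sub continuous_id).mul continuous_const)).tendsto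
      a).mono_left nhdsWithin_le_nhds
  have := le_of_tendsto_of_tendsto hL hline <|
    eventually_of_mem (Ioo_mem_nhdsGT hax) htangent
  linarith

end ConcaveOn

lemma antitoneOn_mul_rpow_neg_of_mul_le {f f' : ℝ → ℝ} {a c : ℝ} (ha : 0 < a)
    (hf : ContinuousOn f (Ici a)) (hf' : ∀ x ∈ Ici a, HasDerivWithinAt f (f' x) (Ici x) x)
    (hle : ∀ x ∈ Ici a, x * f' x ≤ c * f x) :
    AntitoneOn (fun x => f x * x ^ (-c)) (Ici a) := by
  intro x hx y _ hxy
  have hpos : ∀ z ∈ Ici x, 0 < z := fun z hz => ha.trans_le (le_trans hx hz)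
  refine image_le_of_deriv_right_le_deriv_boundary (a := x) (b := y)
    (f := fun z => f z * z ^ (-c)) (f' := fun z => f' z * z ^ (-c) + f z * (-c * z ^ (-c - 1)))
    (B := fun _ => f x * x ^ (-c)) (B' := fun _ => 0) ?_ ?_ le_rfl continuousOn_const
    (fun _ _ => hasDerivWithinAt_const _ _ _)     ?_ ⟨hxy, le_rfl⟩
  · exact (hf.mono ((Icc_subset_Ici_iff hxy).2 hx)).mul
      (continuousOn_id.rpow_const fun z hz => Or.inl (hpos z hz.1).ne')
  · intro z hz
    exact (hf' z (le_trans hx hz.1)).mul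
      (Real.hasDerivAt_rpow_const (Or.inl (hpos z hz.1).ne')).hasDerivWithinAt
  · intro z hz
    have hz0 := hpos z hz.1
    have hsplit : z ^ (-c - 1) = z ^ (-c) * z⁻¹ := by
      rw [Real.rpow_sub_one hz0.ne', div_eq_mul_inv]
    have := hle z (le_trans hx hz.1)
    have hzc : 0 < z ^ (-c) * z⁻¹ := by positivity
    calc f' z * z ^ (-c) + f z * (-c * z ^ (-c - 1))
        = (z * f' z - c * f z) * (z ^ (-c) * z⁻¹) := by rw [hsplit]; field_simp; ring
      _ ≤ 0 := mul_nonpos_of_nonpos_of_nonneg (by linarith) hzc.le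

lemma not_tendsto_div_rpow_atTop_of_eventually_mul_le {f f' : ℝ → ℝ} {c ε : ℝ} (hcε : c < ε)
    (hf : ContinuousOn f (Ioi 0)) (hf' : ∀ x : ℝ, 0 < x → HasDerivWithinAt f (f' x) (Ioi x) x)
    (hle : ∀ᶠ x in atTop, x * f' x ≤ c * f x) :
    ¬Tendsto (fun x => f x / x ^ ε) atTop atTop := by
  obtain ⟨a, ha⟩ := eventually_atTop.1 (hle.and (eventually_gt_atTop 0))
  have ha0 : 0 < a := (ha a le_rfl).2
  have hanti := antitoneOn_mul_rpow_neg_of_mul_le ha0 (hf.mono (Ici_subset_Ioi.2 ha0))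
    (fun x hx => (hf' x (ha0.trans_le hx)).Ici_of_Ioi) (fun x hx => (ha x hx).1)
  have hbound : ∀ x ≥ a, f x / x ^ ε ≤ f a * a ^ (-c) * x ^ (c - ε) := by
    intro x hx
    have hx0 : 0 < x := ha0.trans_le hx
    calc f x / x ^ ε = f x * x ^ (-c) * x ^ (c - ε) := by
          rw [mul_assoc, ← Real.rpow_add hx0, neg_add_eq_sub, sub_sub_cancel_left,
            Real.rpow_neg hx0.le, div_eq_mul_inv]
      _ ≤ f a * a ^ (-c) * x ^ (c - ε) :=
          mul_le_mul_of_nonneg_right (hanti self_mem_Ici hx hx) (Real.rpow_nonneg hx0.le _)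
  have hsmall : Tendsto (fun x : ℝ => f a * a ^ (-c) * x ^ (c - ε)) atTop (𝓝 0) := by
    simpa [neg_sub] using (tendsto_rpow_neg_atTop (sub_pos.2 hcε)).const_mul (f a * a ^ (-c))
  exact fun htop => not_tendsto_atTop_of_tendsto_nhds hsmall <|
    tendsto_atTop_mono' atTop ((eventually_ge_atTop a).mono hbound) htop

theorem stmt_12_general (U U' : ℝ → ℝ)
    (hUconc : ConcaveOn ℝ (Set.Ioi 0) U)
    (hUmono : ∀ ⦃x y : ℝ⦄, 0 < x → x ≤ y → U x ≤ U y)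
    (hUpos : ∀ x : ℝ, 0 < x → 0 < U x)
    (L : ℝ) (hL : Tendsto U (nhdsWithin 0 (Set.Ioi 0)) (nhds L)) (hL0 : 0 ≤ L)
    (hUderiv : ∀ x : ℝ, 0 < x → HasDerivWithinAt U (U' x) (Set.Ioi x) x)
    (ε : ℝ)
    (hgrow : Tendsto (fun x : ℝ => U x / x ^ ε) atTop atTop) :
    ε ≤ Filter.limsup (fun x : ℝ => x * U' x / U x) atTop ∧
      Filter.limsup (fun x : ℝ => x * U' x / U x) atTop ≤ 1 := by
  have hmono : MonotoneOn U (Ioi 0) := fun x hx _ _ hxy => hUmono hx hxy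
  have hbounds : ∀ᶠ x in atTop, 0 ≤ x * U' x / U x ∧ x * U' x / U x ≤ 1 := by
    filter_upwards [eventually_gt_atTop 0] with x hx
    have hU' : 0 ≤ U' x := (hUderiv x hx).nonneg_of_monotoneOn (accPt_principal_Ioi x)
      (hmono.mono (Ioi_subset_Ioi hx.le))
    have htangent : x * U' x ≤ U x - L := by
      simpa using hUconc.sub_mul_le_sub_of_tendsto_nhdsGT hL hx (hUderiv x hx)
    exact ⟨div_nonneg (mul_nonneg hx.le hU') (hUpos x hx).le,
      (div_le_one (hUpos x hx)).2 (by linarith)⟩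
  have hle_one := hbounds.mono fun _ h => h.2
  refine ⟨?_, limsup_le_of_le
    (isBoundedUnder_of_eventually_ge (hbounds.mono fun _ h => h.1)).isCoboundedUnder_le hle_one⟩
  by_contra! hlt
  obtain ⟨c, hlc, hcε⟩ := exists_between hlt
  refine not_tendsto_div_rpow_atTop_of_eventually_mul_le hcε (hUconc.continuousOn isOpen_Ioi)
    hUderiv ?_ hgrow
  filter_upwards [eventually_lt_of_limsup_lt hlc (isBoundedUnder_of_eventually_le hle_one),
    eventually_gt_atTop 0] with x hx hx0
  exact ((div_lt_iff₀ (hUpos x hx0)).1 hx).le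

/-- For a positive nondecreasing concave `U` with `lim_{x↓0} U(x) ≥ 0` which dominates
some power `x^ε`, the asymptotic elasticity satisfies
`ε ≤ limsup_{x→∞} x U'₊(x)/U(x) ≤ 1`. -/
theorem stmt_12 (U U' : ℝ → ℝ)
    (hUconc : ConcaveOn ℝ (Set.Ioi 0) U)
    (hUmono : ∀ ⦃x y : ℝ⦄, 0 < x → x ≤ y → U x ≤ U y)
    (hUpos : ∀ x : ℝ, 0 < x → 0 < U x)
    (L : ℝ) (hL : Tendsto U (nhdsWithin 0 (Set.Ioi 0)) (nhds L)) (hL0 : 0 ≤ L)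
    (hUderiv : ∀ x : ℝ, 0 < x → HasDerivWithinAt U (U' x) (Set.Ioi x) x)
    (ε : ℝ) (hε : 0 < ε)
    (hgrow : Tendsto (fun x : ℝ => U x / x ^ ε) atTop atTop) :
    ε ≤ Filter.limsup (fun x : ℝ => x * U' x / U x) atTop ∧
      Filter.limsup (fun x : ℝ => x * U' x / U x) atTop ≤ 1 :=
  stmt_12_general U U' hUconc hUmono hUpos L hL hL0 hUderiv ε hgrow
end

section
/- Let X : [0,∞) → ℝ be continuous and let F : ℝ → ℝ be continuously differentiable with F' ≥ 0. Then for every t ≥ 0 the Azéma–Yor process satisfies sup_{u ∈ [0,t]} M^F_u(X) = F(X̄_t), where X̄_t = sup_{u ∈ [0,t]} X_u. -/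
/-!
Since `X_s ≤ X̄_s` and `F' ≥ 0`, every value `M^F_s` is at most `F(X̄_s)`, which is at most
`F(X̄_t)` because `F` is nondecreasing. The bound is attained at a time `u ∈ [0,t]` where the
continuous path attains its maximum over `[0,t]`: there `X_u = X̄_u = X̄_t`, so the correction
term of `M^F_u` vanishes.
-/

open Filter Set

/-- Running supremum `X̄_t = sup_{u ∈ [0,t]} X_u` of a path `X`. -/
noncomputable def runSup (X : ℝ → ℝ) (t : ℝ) : ℝ := sSup (X '' Set.Icc 0 t)

/-- Azéma–Yor process `M^F_t(X) = F(X̄_t) - F'(X̄_t)(X̄_t - X_t)`. -/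
noncomputable def AY (F F' X : ℝ → ℝ) (t : ℝ) : ℝ :=
  F (runSup X t) - F' (runSup X t) * (runSup X t - X t)

section RunSup

variable {X : ℝ → ℝ} {s t : ℝ}

lemma le_runSup (hbdd : BddAbove (X '' Icc 0 t)) (ht : 0 ≤ t) : X t ≤ runSup X t :=
  le_csSup hbdd ⟨t, ⟨ht, le_rfl⟩, rfl⟩

lemma runSup_le_runSup (hbdd : BddAbove (X '' Icc 0 t)) (hs : 0 ≤ s) (hst : s ≤ t) :
    runSup X s ≤ runSup X t :=
  csSup_le_csSup hbdd ((nonempty_Icc.2 hs).image X) (image_mono (Icc_subset_Icc_right hst))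

lemma runSup_eq_of_isMaxOn {u : ℝ} (hu : u ∈ Icc 0 t) (hmax : IsMaxOn X (Icc 0 t) u) :
    runSup X t = X u :=
  IsGreatest.csSup_eq ⟨⟨u, hu, rfl⟩, by rintro _ ⟨v, hv, rfl⟩; exact hmax hv⟩

lemma exists_eq_runSup (hX : ContinuousOn X (Icc 0 t)) (ht : 0 ≤ t) :
    ∃ u ∈ Icc 0 t, X u = runSup X u ∧ runSup X u = runSup X t := by
  obtain ⟨u, hu, hmax⟩ := isCompact_Icc.exists_isMaxOn (nonempty_Icc.2 ht) hX
  have hmax_u : IsMaxOn X (Icc 0 u) u := hmax.on_subset (Icc_subset_Icc_right hu.2)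
  have hXu : runSup X u = X u := runSup_eq_of_isMaxOn ⟨hu.1, le_rfl⟩ hmax_u
  exact ⟨u, hu, hXu.symm, hXu.trans (runSup_eq_of_isMaxOn hu hmax).symm⟩

end RunSup

section AzemaYor

variable {F F' X : ℝ → ℝ} {s t : ℝ}

lemma AY_le (hF' : 0 ≤ F' (runSup X s)) (hXs : X s ≤ runSup X s) :
    AY F F' X s ≤ F (runSup X s) := by
  have : 0 ≤ F' (runSup X s) * (runSup X s - X s) := mul_nonneg hF' (sub_nonneg.2 hXs)
  unfold AY
  linarith

lemma AY_eq_of_eq_runSup (h : X s = runSup X s) : AY F F' X s = F (runSup X s) := by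
  simp [AY, h]

theorem isGreatest_image_AY (hX : ContinuousOn X (Icc 0 t)) (hF : Monotone F)
    (hF' : ∀ x, 0 ≤ F' x) (ht : 0 ≤ t) :
    IsGreatest (AY F F' X '' Icc 0 t) (F (runSup X t)) := by
  have hbdd : BddAbove (X '' Icc 0 t) := isCompact_Icc.bddAbove_image hX
  obtain ⟨u, hu, hXu, hrun⟩ := exists_eq_runSup hX ht
  refine ⟨⟨u, hu, by rw [AY_eq_of_eq_runSup hXu, hrun]⟩, ?_⟩
  rintro _ ⟨s, hs, rfl⟩
  have hbdd_s : BddAbove (X '' Icc 0 s) := hbdd.mono (image_mono (Icc_subset_Icc_right hs.2))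
  calc AY F F' X s ≤ F (runSup X s) := AY_le (hF' _) (le_runSup hbdd_s hs.1)
    _ ≤ F (runSup X t) := hF (runSup_le_runSup hbdd hs.1 hs.2)

end AzemaYor

theorem stmt_13_general (X F F' : ℝ → ℝ)
    (hX : ContinuousOn X (Set.Ici 0))
    (hF : ∀ x : ℝ, HasDerivAt F (F' x) x)
    (hF'nonneg : ∀ x : ℝ, 0 ≤ F' x) :
    ∀ t : ℝ, 0 ≤ t → sSup (AY F F' X '' Set.Icc 0 t) = F (runSup X t) := by
  intro t ht
  have hFmono : Monotone F := monotone_of_hasDerivAt_nonneg hF hF'nonneg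
  exact (isGreatest_image_AY (hX.mono Icc_subset_Ici_self) hFmono hF'nonneg ht).csSup_eq

/-- If `F' ≥ 0` then the running supremum of the Azéma–Yor process `M^F(X)` is
`F(X̄_t)`. -/
theorem stmt_13 (X F F' : ℝ → ℝ)
    (hX : ContinuousOn X (Set.Ici 0))
    (hF : ∀ x : ℝ, HasDerivAt F (F' x) x)
    (hF'cont : Continuous F')
    (hF'nonneg : ∀ x : ℝ, 0 ≤ F' x) :
    ∀ t : ℝ, 0 ≤ t → sSup (AY F F' X '' Set.Icc 0 t) = F (runSup X t) :=
  stmt_13_general X F F' hX hF hF'nonneg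
end

section
/- Let w be a drawdown function with constant α₁ ∈ (0,1), v₀ > 0, and F_w := K_w^{−1}. Then liminf_{x→∞} log F_w(x)/log x ≥ 1 − α₁. Consequently, if U : (0,∞) → ℝ is nondecreasing with liminf_{x→∞} U(x)/log x > 0, then liminf_{x→∞} U(F_w(x))/log x > 0. -/
open Filter Set MeasureTheory

/-!
Since `w(u) ≤ α₁ u`, the integrand of `K_w` is at most `1 / ((1 - α₁) u)`, so
`K_w(y) ≤ v₀ (y / v₀)^{1/(1-α₁)}` and hence `F_w(x) ≥ v₀^{α₁} x^{1-α₁}`. Taking logarithms gives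
the first claim; in particular `F_w(x) → ∞`, so `U(F_w(x)) ≥ c log F_w(x)` eventually, which
combined with the first claim gives the second.
-/

open Real Topology

/-- If the integral does not exist it is `0`, which is also below the (nonnegative) bound. -/
theorem integral_one_div_le_log_div {g : ℝ → ℝ} {a b c : ℝ} (hc : 0 < c) (ha : 0 < a)
    (hab : a ≤ b) (hg : ∀ u ∈ Icc a b, c * u ≤ g u) :
    ∫ u in a..b, 1 / g u ≤ log (b / a) / c := by
  by_cases hint : IntervalIntegrable (fun u => 1 / g u) volume a b
  · have hinv : IntervalIntegrable (fun u : ℝ => c⁻¹ * u⁻¹) volume a b := by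
      refine (intervalIntegrable_inv_iff.2 (Or.inr ?_)).const_mul _
      rw [uIcc_of_le hab]
      exact fun h => (h.1.trans_lt' ha).false
    calc ∫ u in a..b, 1 / g u ≤ ∫ u in a..b, c⁻¹ * u⁻¹ :=
          intervalIntegral.integral_mono_on hab hint hinv fun u hu => by
            rw [← mul_inv, ← one_div]
            exact one_div_le_one_div_of_le (by have := ha.trans_le hu.1; positivity) (hg u hu)
      _ = log (b / a) / c := by
          rw [intervalIntegral.integral_const_mul, integral_inv_of_pos ha (ha.trans_le hab),
            inv_mul_eq_div]
  · rw [intervalIntegral.integral_undef hint]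
    exact div_nonneg (log_nonneg ((one_le_div ha).2 hab)) hc.le

theorem log_Kw_le {w : ℝ → ℝ} {α v₀ y : ℝ} (hα : α < 1) (hw : ∀ u, 0 < u → w u ≤ α * u)
    (hv₀ : 0 < v₀) (hy : v₀ ≤ y) :
    log (Kw w v₀ y) ≤ log v₀ + log (y / v₀) / (1 - α) := by
  rw [Kw, log_mul hv₀.ne' (exp_pos _).ne', log_exp]
  gcongr
  refine integral_one_div_le_log_div (sub_pos.2 hα) hv₀ hy fun u hu => ?_
  linarith [hw u (hv₀.trans_le hu.1)]

theorem mul_log_add_le_log_of_Kw_eq {w : ℝ → ℝ} {α v₀ x y : ℝ} (hα : α < 1)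
    (hw : ∀ u, 0 < u → w u ≤ α * u) (hv₀ : 0 < v₀) (hy : v₀ ≤ y) (hKy : Kw w v₀ y = x) :
    (1 - α) * log x + α * log v₀ ≤ log y := by
  have hK := log_Kw_le hα hw hv₀ hy
  rw [hKy, log_div (hv₀.trans_le hy).ne' hv₀.ne'] at hK
  have : (log x - log v₀) * (1 - α) ≤ log y - log v₀ := by
    rw [← le_div_iff₀ (sub_pos.2 hα)]
    linarith
  linarith

theorem tendsto_add_div_log_atTop (a b : ℝ) :
    Tendsto (fun x => a + b / log x) atTop (𝓝 a) := by
  simpa using tendsto_const_nhds.add (tendsto_const_nhds.div_atTop tendsto_log_atTop)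

theorem EReal.coe_le_liminf_coe_of_tendsto {ι : Type*} {l : Filter ι} [l.NeBot] {f g : ι → ℝ}
    {a : ℝ} (hg : Tendsto g l (𝓝 a)) (hgf : g ≤ᶠ[l] f) :
    (a : EReal) ≤ liminf (fun x => (f x : EReal)) l := by
  rw [← (EReal.tendsto_coe.2 hg).liminf_eq]
  exact liminf_le_liminf (hgf.mono fun x hx => EReal.coe_le_coe_iff.2 hx)

theorem exists_pos_eventually_mul_log_lt {U : ℝ → ℝ}
    (hU : 0 < liminf (fun x => ((U x / log x : ℝ) : EReal)) atTop) :
    ∃ c > 0, ∀ᶠ x in atTop, c * log x < U x := by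
  obtain ⟨c, hc0, hc⟩ := EReal.lt_iff_exists_real_btwn.1 hU
  refine ⟨c, by exact_mod_cast hc0, ?_⟩
  filter_upwards [eventually_lt_of_lt_liminf hc, eventually_gt_atTop 1] with x hx hx1
  rw [← lt_div_iff₀ (log_pos hx1)]
  exact_mod_cast hx

theorem stmt_19_general (w : ℝ → ℝ) (α₁ : ℝ) (hα : α₁ ∈ Set.Ioo (0:ℝ) 1)
    (hw : ∀ x : ℝ, 0 < x → 0 < w x / x ∧ w x / x ≤ α₁)
    (v₀ : ℝ) (hv₀ : 0 < v₀)
    (F : ℝ → ℝ)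
    (hF : ∀ x : ℝ, v₀ ≤ x → v₀ ≤ F x ∧ Kw w v₀ (F x) = x ∧ F (Kw w v₀ x) = x) :
    ((1 - α₁ : ℝ) : EReal) ≤
        Filter.liminf (fun x : ℝ => ((Real.log (F x) / Real.log x : ℝ) : EReal)) atTop ∧
    ∀ U : ℝ → ℝ, (∀ ⦃x y : ℝ⦄, 0 < x → x ≤ y → U x ≤ U y) →
      0 < Filter.liminf (fun x : ℝ => ((U x / Real.log x : ℝ) : EReal)) atTop →
      0 < Filter.liminf (fun x : ℝ => ((U (F x) / Real.log x : ℝ) : EReal)) atTop := by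
  have hα₁ : α₁ < 1 := hα.2
  have hwα : ∀ u, 0 < u → w u ≤ α₁ * u := fun u hu => (div_le_iff₀ hu).1 (hw u hu).2
  have hlogF : ∀ x, v₀ ≤ x → (1 - α₁) * log x + α₁ * log v₀ ≤ log (F x) := fun x hx =>
    mul_log_add_le_log_of_Kw_eq hα₁ hwα hv₀ (hF x hx).1 (hF x hx).2.1
  have hratio : ∀ᶠ x in atTop, (1 - α₁) + α₁ * log v₀ / log x ≤ log (F x) / log x := by
    filter_upwards [eventually_ge_atTop v₀, eventually_gt_atTop 1] with x hxv hx1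
    rw [le_div_iff₀ (log_pos hx1), add_mul, div_mul_cancel₀ _ (log_pos hx1).ne']
    exact hlogF x hxv
  have hFtop : Tendsto F atTop atTop := by
    have hlower : Tendsto (fun x => (1 - α₁) * log x + α₁ * log v₀) atTop atTop :=
      tendsto_atTop_add_const_right _ _ (tendsto_log_atTop.const_mul_atTop (sub_pos.2 hα₁))
    refine tendsto_atTop_mono' _ ?_ (tendsto_atTop_mono' (f₂ := fun x => log (F x)) _ ?_ hlower)
    · filter_upwards [eventually_ge_atTop v₀] with x hx
      exact log_le_self (hv₀.le.trans (hF x hx).1)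
    · exact (eventually_ge_atTop v₀).mono hlogF
  refine ⟨EReal.coe_le_liminf_coe_of_tendsto (tendsto_add_div_log_atTop _ _) hratio,
    fun U _ hU => ?_⟩
  obtain ⟨c, hc, hcU⟩ := exists_pos_eventually_mul_log_lt hU
  refine lt_of_lt_of_le (by exact_mod_cast mul_pos hc (sub_pos.2 hα₁))
    (EReal.coe_le_liminf_coe_of_tendsto
      ((tendsto_add_div_log_atTop _ (α₁ * log v₀)).const_mul c) ?_)
  filter_upwards [hratio, hFtop.eventually hcU, eventually_gt_atTop 1] with x hx hUF hx1
  calc c * ((1 - α₁) + α₁ * log v₀ / log x) ≤ c * (log (F x) / log x) := by gcongr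
    _ ≤ U (F x) / log x := by
      rw [← mul_div_assoc]
      exact div_le_div_of_nonneg_right hUF.le (log_pos hx1).le

/-- `liminf_{x→∞} log F_w(x)/log x ≥ 1 - α₁`; consequently a nondecreasing `U` with
`liminf_{x→∞} U(x)/log x > 0` also satisfies `liminf_{x→∞} U(F_w(x))/log x > 0`
(liminfs taken in the extended reals). -/
theorem stmt_19 (w : ℝ → ℝ) (α₁ : ℝ) (hα : α₁ ∈ Set.Ioo (0:ℝ) 1)
    (hwmono : ∀ ⦃x y : ℝ⦄, 0 < x → x ≤ y → w x ≤ w y)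
    (hw : ∀ x : ℝ, 0 < x → 0 < w x / x ∧ w x / x ≤ α₁)
    (v₀ : ℝ) (hv₀ : 0 < v₀)
    (F : ℝ → ℝ)
    (hF : ∀ x : ℝ, v₀ ≤ x → v₀ ≤ F x ∧ Kw w v₀ (F x) = x ∧ F (Kw w v₀ x) = x) :
    ((1 - α₁ : ℝ) : EReal) ≤
        Filter.liminf (fun x : ℝ => ((Real.log (F x) / Real.log x : ℝ) : EReal)) atTop ∧
    ∀ U : ℝ → ℝ, (∀ ⦃x y : ℝ⦄, 0 < x → x ≤ y → U x ≤ U y) →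
      0 < Filter.liminf (fun x : ℝ => ((U x / Real.log x : ℝ) : EReal)) atTop →
      0 < Filter.liminf (fun x : ℝ => ((U (F x) / Real.log x : ℝ) : EReal)) atTop :=
  stmt_19_general w α₁ hα hw v₀ hv₀ F hF
end
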